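/- arXiv:2504.00910 — 3 statements merged into one kernel-verified Lean document; each statement's English description precedes it below -/
import Mathlib

section
/- Let a < b be reals, N ≥ 1 an integer, f : [a, b] → ℝ of class C², h = (b−a)/N, and xᵢ = a + i·h for 0 ≤ i ≤ N. Then there exists ξ ∈ [a, b] such that the total error of the composite trapezoid rule satisfies ∫_a^b f(x) dx − ∑_{i=1}^{N} h·(f(x_{i−1}) + f(xᵢ))/2 = −(1/12)·(b−a)·h²·f''(ξ). -/
open Set intervalIntegral MeasureTheory

private lemma trap_kernel_aux (a b : ℝ) (f f' f'' : ℝ → ℝ)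
    (hf' : ∀ x ∈ Set.Icc a b, HasDerivWithinAt f (f' x) (Set.Icc a b) x)
    (hf'' : ∀ x ∈ Set.Icc a b, HasDerivWithinAt f' (f'' x) (Set.Icc a b) x)
    (hcont : ContinuousOn f'' (Set.Icc a b))
    (c d : ℝ) (hac : a ≤ c) (hcd : c ≤ d) (hdb : d ≤ b) :
    (d - c) * (f c + f d) / 2 - ∫ x in c..d, f x
      = ∫ t in c..d, (t - c) * (d - t) / 2 * f'' t := by
  have hsub : Set.Icc c d ⊆ Set.Icc a b := Set.Icc_subset_Icc hac hdb
  have hcf : ContinuousOn f (Set.Icc a b) := fun x hx => (hf' x hx).continuousWithinAt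
  have hcf' : ContinuousOn f' (Set.Icc a b) := fun x hx => (hf'' x hx).continuousWithinAt
  set W : ℝ → ℝ := fun t => (t - c) * (d - t) / 2 * f' t - (d - 2 * t + c) / 2 * f t with hW
  have hWcont : ContinuousOn W (Set.Icc c d) := by
    apply ContinuousOn.sub
    · exact (((continuousOn_id.sub continuousOn_const).mul
        (continuousOn_const.sub continuousOn_id)).div_const 2).mul (hcf'.mono hsub)
    · exact (((continuousOn_const.sub (continuousOn_const.mul continuousOn_id)).add
        continuousOn_const).div_const 2).mul (hcf.mono hsub)
  have hWderiv : ∀ x ∈ Set.Ioo c d,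
      HasDerivWithinAt W ((x - c) * (d - x) / 2 * f'' x + f x) (Set.Ioi x) x := by
    intro x hx
    have hxab : x ∈ Set.Ioo a b := ⟨lt_of_le_of_lt hac hx.1, lt_of_lt_of_le hx.2 hdb⟩
    have hmem : Set.Icc a b ∈ nhds x := Icc_mem_nhds hxab.1 hxab.2
    have hfd : HasDerivAt f (f' x) x := (hf' x (Set.mem_Icc.2 ⟨hxab.1.le, hxab.2.le⟩)).hasDerivAt hmem
    have hfd' : HasDerivAt f' (f'' x) x := (hf'' x (Set.mem_Icc.2 ⟨hxab.1.le, hxab.2.le⟩)).hasDerivAt hmem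
    have hg : HasDerivAt (fun t => (t - c) * (d - t) / 2) ((d + c - 2 * x) / 2) x := by
      have := (((hasDerivAt_id x).sub_const c).mul
        ((hasDerivAt_const x d).sub (hasDerivAt_id x))).div_const 2
      exact this.congr_deriv (by simp [id]; ring)
    have hg' : HasDerivAt (fun t => (d - 2 * t + c) / 2) (-1) x := by
      have := (((hasDerivAt_const x d).sub ((hasDerivAt_id x).const_mul 2)).add_const c).div_const 2
      exact this.congr_deriv (by ring)
    have : HasDerivAt W (((d + c - 2 * x) / 2 * f' x + (x - c) * (d - x) / 2 * f'' x)
        - ((-1) * f x + (d - 2 * x + c) / 2 * f' x)) x := (hg.mul hfd').sub (hg'.mul hfd)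
    have h2 : HasDerivAt W ((x - c) * (d - x) / 2 * f'' x + f x) x := by
      convert this using 1; ring
    exact h2.hasDerivWithinAt
  have hint1 : IntervalIntegrable (fun t => (t - c) * (d - t) / 2 * f'' t) volume c d := by
    apply ContinuousOn.intervalIntegrable
    rw [Set.uIcc_of_le hcd]
    exact (((continuousOn_id.sub continuousOn_const).mul
      (continuousOn_const.sub continuousOn_id)).div_const 2).mul (hcont.mono hsub)
  have hint2 : IntervalIntegrable f volume c d := by
    apply ContinuousOn.intervalIntegrable
    rw [Set.uIcc_of_le hcd]; exact hcf.mono hsub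
  have key : ∫ t in c..d, ((t - c) * (d - t) / 2 * f'' t + f t) = W d - W c :=
    integral_eq_sub_of_hasDeriv_right_of_le hcd hWcont hWderiv (hint1.add hint2)
  rw [intervalIntegral.integral_add hint1 hint2] at key
  have hWd : W d - W c = (d - c) * (f c + f d) / 2 := by simp only [hW]; ring
  linarith [key]

private lemma kernel_integral_aux (c d : ℝ) :
    ∫ t in c..d, (t - c) * (d - t) / 2 = (d - c) ^ 3 / 12 := by
  have hP : ∀ t : ℝ, HasDerivAt (fun t => (t - c) ^ 2 * (3 * d - 2 * t - c) / 12)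
      ((t - c) * (d - t) / 2) t := by
    intro t
    have := ((((hasDerivAt_id t).sub_const c).pow 2).mul
      (((hasDerivAt_const t (3 * d)).sub ((hasDerivAt_id t).const_mul 2)).sub_const c)).div_const 12
    exact this.congr_deriv (by simp [id]; ring)
  rw [integral_eq_sub_of_hasDerivAt (fun t _ => hP t)]
  · ring
  · exact Continuous.intervalIntegrable (by continuity) _ _

/-- Error of the composite trapezoid rule with `N` equal subintervals: if `f` is
of class `C²` on `[a, b]` (witnessed by `f'` and `f''`), `h = (b - a)/N`, and
`xᵢ = a + i·h`, then there exists `ξ ∈ [a, b]` such that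
`∫_a^b f(x) dx - ∑_{i=1}^N h·(f(x_{i-1}) + f(xᵢ))/2 = -(1/12)·(b - a)·h²·f''(ξ)`. -/
theorem composite_trapezoid_rule_error (a b : ℝ) (hab : a < b) (N : ℕ) (hN : 1 ≤ N)
    (f f' f'' : ℝ → ℝ)
    (hf' : ∀ x ∈ Set.Icc a b, HasDerivWithinAt f (f' x) (Set.Icc a b) x)
    (hf'' : ∀ x ∈ Set.Icc a b, HasDerivWithinAt f' (f'' x) (Set.Icc a b) x)
    (hcont : ContinuousOn f'' (Set.Icc a b))
    (h : ℝ) (hh : h = (b - a) / N) :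
    ∃ ξ ∈ Set.Icc a b,
      (∫ x in a..b, f x)
        - ∑ i ∈ Finset.range N, h * (f (a + i * h) + f (a + (i + 1) * h)) / 2
      = -(1 / 12) * (b - a) * h ^ 2 * f'' ξ := by
  have hN0 : (N : ℝ) ≠ 0 := Nat.cast_ne_zero.2 (by omega)
  have hNpos : (0 : ℝ) < N := by positivity
  have hba : (0:ℝ) < b - a := sub_pos.2 hab
  have hhpos : 0 < h := by rw [hh]; positivity
  have hNh : (N : ℝ) * h = b - a := by rw [hh]; field_simp
  set x : ℕ → ℝ := fun i => a + i * h with hx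
  -- bounds on subinterval endpoints
  have hxmem : ∀ i : ℕ, i ≤ N → x i ∈ Set.Icc a b := by
    intro i hi
    constructor
    · simp only [hx]; nlinarith [Nat.cast_nonneg (α := ℝ) i]
    · simp only [hx]
      have : (i : ℝ) ≤ N := Nat.cast_le.2 hi
      nlinarith
  have hxsucc : ∀ i : ℕ, x i ≤ x (i + 1) := by
    intro i; simp only [hx]; push_cast; nlinarith
  have hcf : ContinuousOn f (Set.Icc a b) := fun y hy => (hf' y hy).continuousWithinAt
  -- min and max of f''
  obtain ⟨ξm, hξm, hmin⟩ := IsCompact.exists_isMinOn isCompact_Icc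
    (Set.nonempty_Icc.2 hab.le) hcont
  obtain ⟨ξM, hξM, hmax⟩ := IsCompact.exists_isMaxOn isCompact_Icc
    (Set.nonempty_Icc.2 hab.le) hcont
  set m : ℝ := f'' ξm
  set M : ℝ := f'' ξM
  -- per-interval bound
  have key : ∀ i ∈ Finset.range N,
      h * (f (x i) + f (x (i + 1))) / 2 - (∫ t in x i..x (i + 1), f t)
        ∈ Set.Icc (m * h ^ 3 / 12) (M * h ^ 3 / 12) := by
    intro i hi
    rw [Finset.mem_range] at hi
    have h1 : a ≤ x i := (hxmem i hi.le).1
    have h2 : x (i + 1) ≤ b := (hxmem (i + 1) hi).2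
    have h3 : x i ≤ x (i + 1) := hxsucc i
    have hd : x (i + 1) - x i = h := by simp only [hx]; push_cast; ring
    have hker := trap_kernel_aux a b f f' f'' hf' hf'' hcont (x i) (x (i + 1)) h1 h3 h2
    rw [hd] at hker
    have hsub : Set.Icc (x i) (x (i + 1)) ⊆ Set.Icc a b := Set.Icc_subset_Icc h1 h2
    have hgint : IntervalIntegrable (fun t => (t - x i) * (x (i + 1) - t) / 2) volume
        (x i) (x (i + 1)) := Continuous.intervalIntegrable (by continuity) _ _
    have hgfint : IntervalIntegrable (fun t => (t - x i) * (x (i + 1) - t) / 2 * f'' t) volume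
        (x i) (x (i + 1)) := by
      apply ContinuousOn.intervalIntegrable
      rw [Set.uIcc_of_le h3]
      exact (((continuousOn_id.sub continuousOn_const).mul
        (continuousOn_const.sub continuousOn_id)).div_const 2).mul (hcont.mono hsub)
    have hgnonneg : ∀ t ∈ Set.Icc (x i) (x (i + 1)), 0 ≤ (t - x i) * (x (i + 1) - t) / 2 := by
      intro t ht
      exact div_nonneg (mul_nonneg (by linarith [ht.1]) (by linarith [ht.2])) (by norm_num)
    have hlow : m * ((x (i+1) - x i) ^ 3 / 12) ≤ ∫ t in x i..x (i + 1),
        (t - x i) * (x (i + 1) - t) / 2 * f'' t := by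
      rw [← kernel_integral_aux, ← intervalIntegral.integral_const_mul]
      apply intervalIntegral.integral_mono_on h3 (hgint.const_mul m) hgfint
      intro t ht
      have hmle : m ≤ f'' t := hmin (hsub ht)
      have := hgnonneg t ht
      nlinarith
    have hhigh : (∫ t in x i..x (i + 1), (t - x i) * (x (i + 1) - t) / 2 * f'' t)
        ≤ M * ((x (i+1) - x i) ^ 3 / 12) := by
      rw [← kernel_integral_aux, ← intervalIntegral.integral_const_mul]
      apply intervalIntegral.integral_mono_on h3 hgfint (hgint.const_mul M)
      intro t ht
      have hMge : f'' t ≤ M := hmax (hsub ht)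
      have := hgnonneg t ht
      nlinarith
    rw [hd] at hlow hhigh
    constructor
    · rw [← hker] at hlow; linarith
    · rw [← hker] at hhigh; linarith
  -- sum of integrals
  have hintf : ∀ k < N, IntervalIntegrable f volume (x k) (x (k + 1)) := by
    intro k hk
    apply ContinuousOn.intervalIntegrable
    rw [Set.uIcc_of_le (hxsucc k)]
    exact hcf.mono (Set.Icc_subset_Icc (hxmem k hk.le).1 (hxmem (k + 1) hk).2)
  have hsum : ∑ i ∈ Finset.range N, ∫ t in x i..x (i + 1), f t = ∫ t in a..b, f t := by
    rw [intervalIntegral.sum_integral_adjacent_intervals hintf]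
    congr 1
    · simp [hx]
    · simp only [hx]; rw [hNh]; ring
  -- total difference
  set S : ℝ := ∑ i ∈ Finset.range N, h * (f (x i) + f (x (i + 1))) / 2 with hS
  have hdiff : S - ∫ t in a..b, f t
      = ∑ i ∈ Finset.range N, (h * (f (x i) + f (x (i + 1))) / 2 - ∫ t in x i..x (i + 1), f t) := by
    rw [Finset.sum_sub_distrib, hsum]
  have hlowS : (N : ℝ) * (m * h ^ 3 / 12) ≤ S - ∫ t in a..b, f t := by
    rw [hdiff]
    calc (N : ℝ) * (m * h ^ 3 / 12)
        = ∑ _i ∈ Finset.range N, m * h ^ 3 / 12 := by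
          rw [Finset.sum_const, Finset.card_range, nsmul_eq_mul]
      _ ≤ _ := Finset.sum_le_sum fun i hi => (key i hi).1
  have hhighS : S - (∫ t in a..b, f t) ≤ (N : ℝ) * (M * h ^ 3 / 12) := by
    rw [hdiff]
    calc ∑ i ∈ Finset.range N, (h * (f (x i) + f (x (i + 1))) / 2 - ∫ t in x i..x (i + 1), f t)
        ≤ ∑ _i ∈ Finset.range N, M * h ^ 3 / 12 := Finset.sum_le_sum fun i hi => (key i hi).2
      _ = (N : ℝ) * (M * h ^ 3 / 12) := by
          rw [Finset.sum_const, Finset.card_range, nsmul_eq_mul]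
  -- IVT
  set K : ℝ := (b - a) * h ^ 2 / 12 with hK
  have hKpos : 0 < K := by rw [hK]; have := sub_pos.2 hab; positivity
  have hNK : (N : ℝ) * (h ^ 3 / 12) = K := by rw [hK, ← hNh]; ring
  set v : ℝ := (S - ∫ t in a..b, f t) / K with hv
  have hvm : m ≤ v := by
    rw [hv, le_div_iff₀ hKpos]
    calc m * K = (N : ℝ) * (m * h ^ 3 / 12) := by rw [← hNK]; ring
      _ ≤ _ := hlowS
  have hvM : v ≤ M := by
    rw [hv, div_le_iff₀ hKpos]
    calc S - ∫ t in a..b, f t ≤ (N : ℝ) * (M * h ^ 3 / 12) := hhighS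
      _ = M * K := by rw [← hNK]; ring
  have hmM : m ≤ M := le_trans (hmin hξM) (le_refl _)
  have hIVT : v ∈ Set.uIcc (f'' ξm) (f'' ξM) := by
    rw [Set.uIcc_of_le hmM]; exact ⟨hvm, hvM⟩
  have hsubu : Set.uIcc ξm ξM ⊆ Set.Icc a b := by
    rw [← Set.uIcc_of_le hab.le]
    exact Set.uIcc_subset_uIcc (by rw [Set.uIcc_of_le hab.le]; exact hξm)
      (by rw [Set.uIcc_of_le hab.le]; exact hξM)
  obtain ⟨ξ, hξmem, hξeq⟩ := intermediate_value_uIcc (hcont.mono hsubu) hIVT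
  refine ⟨ξ, hsubu hξmem, ?_⟩
  have hKv : K * v = S - ∫ t in a..b, f t := by
    rw [hv, mul_comm, div_mul_cancel₀ _ hKpos.ne']
  have : f'' ξ = v := hξeq
  rw [this]
  have hSgoal : ∑ i ∈ Finset.range N, h * (f (a + i * h) + f (a + (i + 1) * h)) / 2 = S := by
    refine Finset.sum_congr rfl fun i _ => ?_
    simp only [hS, hx]; push_cast; ring_nf
  rw [hSgoal]
  have : (∫ t in a..b, f t) - S = -(K * v) := by rw [hKv]; ring
  calc (∫ t in a..b, f t) - S = -(K * v) := this
    _ = -(1/12) * (b - a) * h ^ 2 * v := by rw [hK]; ring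
end

section
/- (Theorem, tightness of the refined bound) Let a < b be reals, let k ≤ N be positive integers, let f : [a, b] → ℝ be of class C², set l = (b−a)/k, let I_j = [a + (j−1)·l, a + j·l] for 1 ≤ j ≤ k, set M_j = max_{x ∈ I_j} |f''(x)|, and assume M_j > 0 for every j. Define n_j = ⌈N·√(M_j) / ∑_{p=1}^{k} √(M_p)⌉. Then for any choice of points ξ_j ∈ I_j (1 ≤ j ≤ k), ∑_{j=1}^{k} (l³/12)·(1/n_j²)·|f''(ξ_j)| ≤ (1/12)·((b−a)³/N²)·max_{x ∈ [a,b]} |f''(x)|. -/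
/-- Tightness of the refined bound: with `[a,b]` split into `k` equal
subintervals `I_j` of length `l = (b-a)/k` (indexed here by `j : Fin k`, so that
`I_j = [a + j·l, a + (j+1)·l]`), `M_j = max_{x ∈ I_j} |f''(x)| > 0` and
`n_j = ⌈N·√(M_j)/∑_p √(M_p)⌉`, for any choice of `ξ_j ∈ I_j` we have
`∑_j (l³/12)·(1/n_j²)·|f''(ξ_j)| ≤ (1/12)·((b-a)³/N²)·max_{x ∈ [a,b]} |f''(x)|`. -/
theorem refined_bound_tighter (a b : ℝ) (hab : a < b)
    (k N : ℕ) (hk : 0 < k) (hkN : k ≤ N)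
    (f f' f'' : ℝ → ℝ)
    (hf' : ∀ x ∈ Set.Icc a b, HasDerivWithinAt f (f' x) (Set.Icc a b) x)
    (hf'' : ∀ x ∈ Set.Icc a b, HasDerivWithinAt f' (f'' x) (Set.Icc a b) x)
    (hcont : ContinuousOn f'' (Set.Icc a b))
    (l : ℝ) (hl : l = (b - a) / k)
    (M : Fin k → ℝ)
    (hM : ∀ j : Fin k, M j = ⨆ x : Set.Icc (a + (j : ℝ) * l) (a + ((j : ℝ) + 1) * l), |f'' x.1|)
    (hMpos : ∀ j, 0 < M j)
    (n : Fin k → ℕ)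
    (hn : ∀ j, n j = ⌈(N : ℝ) * Real.sqrt (M j) / ∑ p, Real.sqrt (M p)⌉₊)
    (ξ : Fin k → ℝ)
    (hξ : ∀ j : Fin k, ξ j ∈ Set.Icc (a + (j : ℝ) * l) (a + ((j : ℝ) + 1) * l)) :
    ∑ j, l ^ 3 / 12 * (1 / (n j : ℝ) ^ 2) * |f'' (ξ j)|
      ≤ 1 / 12 * ((b - a) ^ 3 / N ^ 2) * ⨆ x : Set.Icc a b, |f'' x.1| := by
  have hk' : (0:ℝ) < k := by exact_mod_cast hk
  have hN' : (0:ℝ) < N := by exact_mod_cast lt_of_lt_of_le hk hkN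
  have hba : 0 < b - a := sub_pos.2 hab
  have hl0 : 0 < l := by rw [hl]; positivity
  set S := ∑ p, Real.sqrt (M p) with hSdef
  have hSpos : 0 < S := Finset.sum_pos (fun p _ => Real.sqrt_pos.2 (hMpos p))
    ⟨⟨0, hk⟩, Finset.mem_univ _⟩
  have hsub : ∀ j : Fin k, Set.Icc (a + (j:ℝ)*l) (a + ((j:ℝ)+1)*l) ⊆ Set.Icc a b := by
    intro j
    apply Set.Icc_subset_Icc
    · nlinarith [hl0, (Nat.cast_nonneg j.1 : (0:ℝ) ≤ j.1)]
    · have hjk : ((j:ℝ) + 1) ≤ k := by exact_mod_cast j.2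
      have : ((j:ℝ)+1) * l ≤ k * l := by nlinarith
      have hkl : (k:ℝ) * l = b - a := by rw [hl]; field_simp
      linarith
  have hrange : (Set.range fun x : Set.Icc a b => |f'' x.1|) = (fun x => |f'' x|) '' Set.Icc a b := by
    ext y
    constructor
    · rintro ⟨⟨x, hx⟩, rfl⟩; exact ⟨x, hx, rfl⟩
    · rintro ⟨x, hx, rfl⟩; exact ⟨⟨x, hx⟩, rfl⟩
  have hbddBig : BddAbove (Set.range fun x : Set.Icc a b => |f'' x.1|) := by
    rw [hrange]
    exact (isCompact_Icc.image_of_continuousOn hcont.abs).bddAbove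
  have hbdd : ∀ j : Fin k, BddAbove (Set.range fun x : Set.Icc (a + (j:ℝ)*l) (a + ((j:ℝ)+1)*l) => |f'' x.1|) := by
    intro j
    obtain ⟨C, hC⟩ := hbddBig
    refine ⟨C, ?_⟩
    rintro y ⟨⟨x, hx⟩, rfl⟩
    exact hC ⟨⟨x, hsub j hx⟩, rfl⟩
  set Mmax := ⨆ x : Set.Icc a b, |f'' x.1| with hMmaxdef
  have hnonemp : ∀ j : Fin k, Nonempty (Set.Icc (a + (j:ℝ)*l) (a + ((j:ℝ)+1)*l)) := by
    intro j
    refine Set.Nonempty.to_subtype ⟨ξ j, hξ j⟩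
  have hMle : ∀ j, M j ≤ Mmax := by
    intro j
    rw [hM j]
    haveI := hnonemp j
    exact ciSup_le fun x => le_ciSup hbddBig ⟨x.1, hsub j x.2⟩
  have hMmaxpos : 0 < Mmax := lt_of_lt_of_le (hMpos ⟨0, hk⟩) (hMle _)
  have hξle : ∀ j, |f'' (ξ j)| ≤ M j := by
    intro j
    rw [hM j]
    exact le_ciSup (hbdd j) ⟨ξ j, hξ j⟩
  have hnge : ∀ j, (N:ℝ) * Real.sqrt (M j) / S ≤ n j := by
    intro j; rw [hn j]; exact Nat.le_ceil _
  have hnpos : ∀ j, (0:ℝ) < n j := by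
    intro j
    have : (0:ℝ) < (N:ℝ) * Real.sqrt (M j) / S :=
      div_pos (mul_pos hN' (Real.sqrt_pos.2 (hMpos j))) hSpos
    linarith [hnge j]
  have key : ∀ j, l ^ 3 / 12 * (1 / (n j : ℝ) ^ 2) * |f'' (ξ j)| ≤ l^3 * S^2 / (12 * N^2) := by
    intro j
    have hs : Real.sqrt (M j) ^ 2 = M j := Real.sq_sqrt (hMpos j).le
    have hsq : (N:ℝ)^2 * M j ≤ (n j : ℝ)^2 * S^2 := by
      have h := hnge j
      rw [div_le_iff₀ hSpos] at h
      have hnn : (0:ℝ) ≤ (N:ℝ) * Real.sqrt (M j) := by positivity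
      nlinarith [mul_le_mul h h hnn (mul_nonneg (hnpos j).le hSpos.le), hs]
    have hdiv : M j / (n j : ℝ)^2 ≤ S^2 / (N:ℝ)^2 := by
      rw [div_le_div_iff₀ (pow_pos (hnpos j) 2) (by positivity)]
      linarith
    have step1 : l ^ 3 / 12 * (1 / (n j : ℝ) ^ 2) * |f'' (ξ j)|
        ≤ l ^ 3 / 12 * (1 / (n j : ℝ) ^ 2) * M j :=
      mul_le_mul_of_nonneg_left (hξle j) (by positivity)
    have step2 : l ^ 3 / 12 * (1 / (n j : ℝ) ^ 2) * M j ≤ l^3 * S^2 / (12 * N^2) := by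
      have h2 : l ^ 3 / 12 * (1 / (n j : ℝ) ^ 2) * M j = l ^ 3 / 12 * (M j / (n j : ℝ)^2) := by
        ring
      have h3 : l^3 * S^2 / (12 * N^2) = l ^ 3 / 12 * (S^2 / (N:ℝ)^2) := by ring
      rw [h2, h3]
      exact mul_le_mul_of_nonneg_left hdiv (by positivity)
    linarith
  have hSle : S ≤ k * Real.sqrt Mmax := by
    calc S ≤ ∑ _p : Fin k, Real.sqrt Mmax :=
        Finset.sum_le_sum (fun p _ => Real.sqrt_le_sqrt (hMle p))
      _ = k * Real.sqrt Mmax := by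
          rw [Finset.sum_const, Finset.card_univ, Fintype.card_fin]; simp [nsmul_eq_mul]
  have hS2 : S^2 ≤ (k:ℝ)^2 * Mmax := by
    have hms : Real.sqrt Mmax ^ 2 = Mmax := Real.sq_sqrt hMmaxpos.le
    nlinarith [hSpos, Real.sqrt_nonneg Mmax, hk']
  have hkl : (k:ℝ) * l = b - a := by rw [hl]; field_simp
  have hfinal : (k:ℝ) * (l^3 * S^2 / (12 * N^2)) ≤ 1 / 12 * ((b - a) ^ 3 / N ^ 2) * Mmax := by
    rw [← hkl]
    have h1 : (k:ℝ) * (l^3 * S^2) ≤ ((k:ℝ)*l)^3 * Mmax := by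
      nlinarith [mul_le_mul_of_nonneg_left hS2 (show (0:ℝ) ≤ (k:ℝ)*l^3 by positivity)]
    calc (k:ℝ) * (l^3 * S^2 / (12 * N^2)) = (k:ℝ)*(l^3*S^2) / (12*N^2) := by ring
      _ ≤ ((k:ℝ)*l)^3 * Mmax / (12*N^2) := by
          exact div_le_div_of_nonneg_right h1 (by positivity) |>.trans_eq rfl
      _ = 1 / 12 * (((k:ℝ)*l) ^ 3 / N ^ 2) * Mmax := by ring
  calc ∑ j, l ^ 3 / 12 * (1 / (n j : ℝ) ^ 2) * |f'' (ξ j)|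
      ≤ ∑ _j : Fin k, l^3 * S^2 / (12 * N^2) := Finset.sum_le_sum (fun j _ => key j)
    _ = k * (l^3 * S^2 / (12 * N^2)) := by
        rw [Finset.sum_const, Finset.card_univ, Fintype.card_fin]; simp [nsmul_eq_mul]
    _ ≤ 1 / 12 * ((b - a) ^ 3 / N ^ 2) * Mmax := hfinal
end

section
/- (Refined quadrature error bound) Let a < b, let k ≤ N be positive integers, let f : [a, b] → ℝ be of class C², set l = (b−a)/k, let I_j = [a + (j−1)·l, a + j·l], set M_j = max_{x ∈ I_j} |f''(x)|, and assume M_j > 0 for every j. Define n_j = ⌈N·√(M_j) / ∑_{p=1}^{k} √(M_p)⌉, and on each I_j apply the composite trapezoid rule with n_j equal subintervals. Then the absolute error of the resulting quadrature of ∫_a^b f(x) dx is at most (1/12)·((b−a)³/N²)·max_{x ∈ [a,b]} |f''(x)|. -/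
open Set MeasureTheory intervalIntegral Topology

lemma trap_single (c d : ℝ) (hcd : c ≤ d) (f f' f'' : ℝ → ℝ)
    (hf' : ∀ x ∈ Set.Icc c d, HasDerivWithinAt f (f' x) (Set.Icc c d) x)
    (hf'' : ∀ x ∈ Set.Icc c d, HasDerivWithinAt f' (f'' x) (Set.Icc c d) x)
    (hcont : ContinuousOn f'' (Set.Icc c d))
    (C : ℝ) (hC : ∀ x ∈ Set.Icc c d, |f'' x| ≤ C) :
    |(∫ x in c..d, f x) - (d - c) * (f c + f d) / 2| ≤ C * (d - c) ^ 3 / 12 := by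
  have hfc : ContinuousOn f (Set.Icc c d) := fun x hx => (hf' x hx).continuousWithinAt
  have hf'c : ContinuousOn f' (Set.Icc c d) := fun x hx => (hf'' x hx).continuousWithinAt
  have hC0 : 0 ≤ C := le_trans (abs_nonneg _) (hC c ⟨le_refl c, hcd⟩)
  -- derivatives at interior points
  have hfa : ∀ t ∈ Set.Ioo c d, HasDerivAt f (f' t) t := fun t ht =>
    (hf' t (Set.Ioo_subset_Icc_self ht)).hasDerivAt (Icc_mem_nhds ht.1 ht.2)
  have hf'a : ∀ t ∈ Set.Ioo c d, HasDerivAt f' (f'' t) t := fun t ht =>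
    (hf'' t (Set.Ioo_subset_Icc_self ht)).hasDerivAt (Icc_mem_nhds ht.1 ht.2)
  set ψ : ℝ → ℝ := fun s => (f s - f c) / 2 - (s - c) * f' s / 2 with hψdef
  have hψcont : ContinuousOn ψ (Set.Icc c d) := by
    apply ContinuousOn.sub
    · exact (hfc.sub continuousOn_const).div_const 2
    · exact (((continuousOn_id.sub continuousOn_const)).mul hf'c).div_const 2
  have hψderiv : ∀ t ∈ Set.Ioo c d, HasDerivAt ψ (-(t - c) * f'' t / 2) t := by
    intro t ht
    have h1 : HasDerivAt (fun s => (f s - f c) / 2) (f' t / 2) t :=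
      ((hfa t ht).sub_const _).div_const 2
    have h2 : HasDerivAt (fun s : ℝ => s - c) 1 t := (hasDerivAt_id t).sub_const c
    have h3 : HasDerivAt (fun s => (s - c) * f' s / 2)
        ((1 * f' t + (t - c) * f'' t) / 2) t := (h2.mul (hf'a t ht)).div_const 2
    have := h1.sub h3
    refine this.congr_deriv ?_
    ring
  have hker_int : ∀ s ∈ Set.Icc c d, IntervalIntegrable (fun t => -(t - c) * f'' t / 2) volume c s := by
    intro s hs
    apply ContinuousOn.intervalIntegrable
    apply ContinuousOn.div_const
    apply ContinuousOn.mul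
    · exact (continuousOn_id.sub continuousOn_const).neg
    · apply hcont.mono
      rw [Set.uIcc_of_le hs.1]
      exact Set.Icc_subset_Icc le_rfl hs.2
  -- step 1 : ψ s = ∫ kernel
  have hψeq : ∀ s ∈ Set.Icc c d, ψ s = ∫ t in c..s, -(t - c) * f'' t / 2 := by
    intro s hs
    have := integral_eq_sub_of_hasDeriv_right_of_le hs.1
      (hψcont.mono (Set.Icc_subset_Icc le_rfl hs.2))
      (fun t ht => (hψderiv t ⟨ht.1, lt_of_lt_of_le ht.2 hs.2⟩).hasDerivWithinAt)
      (hker_int s hs)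
    have hψc : ψ c = 0 := by simp [hψdef]
    rw [this, hψc, sub_zero]
  -- step 2 : |ψ s| ≤ C (s-c)^2/4
  have hψbound : ∀ s ∈ Set.Icc c d, |ψ s| ≤ C * (s - c) ^ 2 / 4 := by
    intro s hs
    rw [hψeq s hs]
    have hb : ∀ t ∈ Set.Ioc c s, ‖-(t - c) * f'' t / 2‖ ≤ C * (t - c) / 2 := by
      intro t ht
      have htm : t ∈ Set.Icc c d := ⟨ht.1.le, le_trans ht.2 hs.2⟩
      have h1 : |(-(t - c) * f'' t / 2)| = (t - c) * |f'' t| / 2 := by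
        rw [abs_div, abs_mul, abs_neg, abs_of_nonneg (by linarith [ht.1] : (0:ℝ) ≤ t - c)]
        norm_num
      rw [Real.norm_eq_abs, h1]
      have := hC t htm
      have h2 : (0:ℝ) ≤ t - c := by linarith [ht.1]
      nlinarith
    calc |∫ t in c..s, -(t - c) * f'' t / 2| = ‖∫ t in c..s, -(t - c) * f'' t / 2‖ :=
          (Real.norm_eq_abs _).symm
      _ ≤ |∫ t in c..s, C * (t - c) / 2| := by
          apply intervalIntegral.norm_integral_le_abs_of_norm_le
          · rw [MeasureTheory.ae_restrict_iff' measurableSet_uIoc]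
            refine Filter.Eventually.of_forall (fun t ht => ?_)
            rw [Set.uIoc_of_le hs.1] at ht
            exact hb t ht
          · apply ContinuousOn.intervalIntegrable
            exact ((continuousOn_const.mul (continuousOn_id.sub continuousOn_const)).div_const 2)
      _ = C * (s - c) ^ 2 / 4 := by
          have : ∫ t in c..s, C * (t - c) / 2 = C * (s - c) ^ 2 / 4 - C * (c - c) ^ 2 / 4 := by
            apply integral_eq_sub_of_hasDerivAt
            · intro t _
              have h2 : HasDerivAt (fun u : ℝ => u - c) 1 t := (hasDerivAt_id t).sub_const c
              have : HasDerivAt (fun u : ℝ => C * (u - c) ^ 2 / 4) (C * (2 * (t-c) ^ 1 * 1) / 4) t :=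
                ((h2.pow 2).const_mul C).div_const 4
              refine this.congr_deriv ?_
              ring
            · apply ContinuousOn.intervalIntegrable
              exact ((continuousOn_const.mul (continuousOn_id.sub continuousOn_const)).div_const 2)
          rw [this]
          rw [abs_of_nonneg]
          · ring
          · nlinarith [hs.1, sq_nonneg (s - c)]
  -- step 3
  set g : ℝ → ℝ := fun s => (∫ x in c..s, f x) - (s - c) * (f c + f s) / 2 with hgdef
  have hFint : IntegrableOn f (Set.uIcc c d) := by
    rw [Set.uIcc_of_le hcd]; exact hfc.integrableOn_compact isCompact_Icc
  have hFcont : ContinuousOn (fun s => ∫ x in c..s, f x) (Set.Icc c d) := by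
    have := intervalIntegral.continuousOn_primitive_interval hFint
    rwa [Set.uIcc_of_le hcd] at this
  have hgcont : ContinuousOn g (Set.Icc c d) :=
    hFcont.sub ((((continuousOn_id.sub continuousOn_const)).mul
      (continuousOn_const.add hfc)).div_const 2)
  have hgderiv : ∀ t ∈ Set.Ioo c d, HasDerivAt g (ψ t) t := by
    intro t ht
    have htm : t ∈ Set.Icc c d := Set.Ioo_subset_Icc_self ht
    have hmeas : StronglyMeasurableAtFilter f (𝓝 t) volume :=
      ContinuousAt.stronglyMeasurableAtFilter isOpen_Ioo
        (fun x hx => (hfc x (Set.Ioo_subset_Icc_self hx)).continuousAt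
          (Icc_mem_nhds hx.1 hx.2)) t ht
    have hFd : HasDerivAt (fun s => ∫ x in c..s, f x) (f t) t := by
      apply intervalIntegral.integral_hasDerivAt_right
      · apply ContinuousOn.intervalIntegrable
        apply hfc.mono
        rw [Set.uIcc_of_le htm.1]
        exact Set.Icc_subset_Icc le_rfl htm.2
      · exact hmeas
      · exact (hfc t htm).continuousAt (Icc_mem_nhds ht.1 ht.2)
    have h2 : HasDerivAt (fun s : ℝ => s - c) 1 t := (hasDerivAt_id t).sub_const c
    have h3 : HasDerivAt (fun s => (s - c) * (f c + f s) / 2)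
        ((1 * (f c + f t) + (t - c) * (0 + f' t)) / 2) t :=
      (h2.mul ((hasDerivAt_const t (f c)).add (hfa t ht))).div_const 2
    have := hFd.sub h3
    refine this.congr_deriv ?_
    simp only [hψdef]
    ring
  have hgint : IntervalIntegrable ψ volume c d :=
    ContinuousOn.intervalIntegrable (by rw [Set.uIcc_of_le hcd]; exact hψcont)
  have key : (∫ s in c..d, ψ s) = g d - g c :=
    integral_eq_sub_of_hasDeriv_right_of_le hcd hgcont
      (fun t ht => (hgderiv t ht).hasDerivWithinAt) hgint
  have hgc : g c = 0 := by simp [hgdef]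
  have hgd : |(∫ x in c..d, f x) - (d - c) * (f c + f d) / 2| = |∫ s in c..d, ψ s| := by
    rw [key, hgc, sub_zero]
  rw [hgd]
  calc |∫ s in c..d, ψ s| = ‖∫ s in c..d, ψ s‖ := (Real.norm_eq_abs _).symm
    _ ≤ |∫ s in c..d, C * (s - c) ^ 2 / 4| := by
        apply intervalIntegral.norm_integral_le_abs_of_norm_le
        · rw [MeasureTheory.ae_restrict_iff' measurableSet_uIoc]
          refine Filter.Eventually.of_forall (fun t ht => ?_)
          rw [Set.uIoc_of_le hcd] at ht
          rw [Real.norm_eq_abs]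
          exact hψbound t ⟨ht.1.le, ht.2⟩
        · apply ContinuousOn.intervalIntegrable
          exact ((continuousOn_const.mul
            ((continuousOn_id.sub continuousOn_const).pow 2)).div_const 4)
    _ ≤ C * (d - c) ^ 3 / 12 := by
        have heq : ∫ t in c..d, C * (t - c) ^ 2 / 4
            = C * (d - c) ^ 3 / 12 - C * (c - c) ^ 3 / 12 := by
          apply integral_eq_sub_of_hasDerivAt
          · intro t _
            have h2 : HasDerivAt (fun u : ℝ => u - c) 1 t := (hasDerivAt_id t).sub_const c
            have : HasDerivAt (fun u : ℝ => C * (u - c) ^ 3 / 12)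
                (C * (3 * (t - c) ^ 2 * 1) / 12) t := ((h2.pow 3).const_mul C).div_const 12
            refine this.congr_deriv ?_
            ring
          · apply ContinuousOn.intervalIntegrable
            exact ((continuousOn_const.mul
              ((continuousOn_id.sub continuousOn_const).pow 2)).div_const 4)
        rw [heq]
        have h9 : (0:ℝ) ≤ C * (d - c) ^ 3 / 12 - C * (c - c) ^ 3 / 12 := by
          have := pow_nonneg (sub_nonneg.mpr hcd) 3
          nlinarith
        rw [abs_of_nonneg h9]
        nlinarith

lemma trap_composite (a b c0 : ℝ) (f f' f'' : ℝ → ℝ)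
    (hf' : ∀ x ∈ Set.Icc a b, HasDerivWithinAt f (f' x) (Set.Icc a b) x)
    (hf'' : ∀ x ∈ Set.Icc a b, HasDerivWithinAt f' (f'' x) (Set.Icc a b) x)
    (hcont : ContinuousOn f'' (Set.Icc a b))
    (m : ℕ) (hm : 0 < m) (l C : ℝ) (hl0 : 0 < l)
    (hsub : Set.Icc c0 (c0 + l) ⊆ Set.Icc a b)
    (hC : ∀ x ∈ Set.Icc c0 (c0 + l), |f'' x| ≤ C) :
    |(∫ t in c0..(c0 + l), f t) - ∑ i ∈ Finset.range m,
        l / m * (f (c0 + i * (l / m)) + f (c0 + ((i : ℝ) + 1) * (l / m))) / 2|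
      ≤ C * l ^ 3 / (12 * m ^ 2) := by
  have hfc : ContinuousOn f (Set.Icc a b) := fun x hx => (hf' x hx).continuousWithinAt
  have hm0 : (0:ℝ) < m := Nat.cast_pos.mpr hm
  set δ : ℝ := l / m with hδ
  have hδ0 : 0 < δ := div_pos hl0 hm0
  set x : ℕ → ℝ := fun i => c0 + i * δ with hx
  have hx0 : x 0 = c0 := by simp [hx]
  have hxm : x m = c0 + l := by
    simp only [hx, hδ]
    field_simp
  have hstep : ∀ i : ℕ, x (i + 1) - x i = δ := by
    intro i
    simp only [hx]
    push_cast
    ring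
  have hxmono : ∀ i i' : ℕ, i ≤ i' → x i ≤ x i' := by
    intro i i' h
    simp only [hx]
    have : (i:ℝ) ≤ i' := Nat.cast_le.mpr h
    nlinarith
  have hpsub : ∀ i : ℕ, i < m → Set.Icc (x i) (x (i + 1)) ⊆ Set.Icc c0 (c0 + l) := by
    intro i hi
    refine Set.Icc_subset_Icc ?_ ?_
    · rw [← hx0]; exact hxmono 0 i (Nat.zero_le _)
    · rw [← hxm]; exact hxmono (i+1) m hi
  have hstep_le : ∀ i : ℕ, x i ≤ x (i + 1) := fun i => hxmono i (i+1) (Nat.le_succ _)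
  have hint : ∀ i : ℕ, i < m → IntervalIntegrable f volume (x i) (x (i + 1)) := by
    intro i hi
    apply ContinuousOn.intervalIntegrable
    apply hfc.mono
    rw [Set.uIcc_of_le (hstep_le i)]
    exact (hpsub i hi).trans hsub
  have hsplit : (∫ t in c0..(c0 + l), f t)
      = ∑ i ∈ Finset.range m, ∫ t in (x i)..(x (i + 1)), f t := by
    rw [intervalIntegral.sum_integral_adjacent_intervals hint, hx0, hxm]
  rw [hsplit, ← Finset.sum_sub_distrib]
  refine le_trans (Finset.abs_sum_le_sum_abs _ _) ?_
  have hpb : ∀ i ∈ Finset.range m,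
      |(∫ t in (x i)..(x (i + 1)), f t)
        - δ * (f (c0 + i * δ) + f (c0 + ((i : ℝ) + 1) * δ)) / 2| ≤ C * δ ^ 3 / 12 := by
    intro i hi
    have him := Finset.mem_range.mp hi
    have hsub' : Set.Icc (x i) (x (i + 1)) ⊆ Set.Icc a b := (hpsub i him).trans hsub
    have := trap_single (x i) (x (i + 1)) (hstep_le i) f f' f''
      (fun y hy => (hf' y (hsub' hy)).mono hsub')
      (fun y hy => (hf'' y (hsub' hy)).mono hsub')
      (hcont.mono hsub') C (fun y hy => hC y (hpsub i him hy))
    rw [hstep i] at this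
    have hx1 : x i = c0 + i * δ := rfl
    have hx2 : x (i + 1) = c0 + ((i : ℝ) + 1) * δ := by
      simp only [hx]
      push_cast
      ring
    rw [hx1, hx2] at this
    rw [hx1, hx2]
    exact this
  refine le_trans (Finset.sum_le_sum hpb) ?_
  rw [Finset.sum_const, Finset.card_range, nsmul_eq_mul, hδ]
  refine le_of_eq ?_
  field_simp


set_option maxHeartbeats 2000000 in
/-- Refined quadrature error bound: `[a,b]` is split into `k` equal subintervals
`I_j = [a + j·l, a + (j+1)·l]` (`j : Fin k`) of length `l = (b-a)/k`, with
`M_j = max_{x ∈ I_j} |f''(x)| > 0` and `n_j = ⌈N·√(M_j)/∑_p √(M_p)⌉`; on `I_j`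
the composite trapezoid rule with `n_j` equal subintervals is applied. Then the
absolute error of the resulting quadrature of `∫_a^b f` is at most
`(1/12)·((b-a)³/N²)·max_{x ∈ [a,b]} |f''(x)|`. -/
theorem refined_quadrature_error_bound (a b : ℝ) (hab : a < b)
    (k N : ℕ) (hk : 0 < k) (hkN : k ≤ N)
    (f f' f'' : ℝ → ℝ)
    (hf' : ∀ x ∈ Set.Icc a b, HasDerivWithinAt f (f' x) (Set.Icc a b) x)
    (hf'' : ∀ x ∈ Set.Icc a b, HasDerivWithinAt f' (f'' x) (Set.Icc a b) x)
    (hcont : ContinuousOn f'' (Set.Icc a b))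
    (l : ℝ) (hl : l = (b - a) / k)
    (M : Fin k → ℝ)
    (hM : ∀ j : Fin k,
      M j = ⨆ x : Set.Icc (a + (j : ℝ) * l) (a + ((j : ℝ) + 1) * l), |f'' x.1|)
    (hMpos : ∀ j, 0 < M j)
    (n : Fin k → ℕ)
    (hn : ∀ j, n j = ⌈(N : ℝ) * Real.sqrt (M j) / ∑ p, Real.sqrt (M p)⌉₊)
    (S : ℝ)
    (hS : S = ∑ j : Fin k, ∑ i ∈ Finset.range (n j),
      l / n j * (f (a + j * l + i * (l / n j)) + f (a + j * l + (i + 1) * (l / n j))) / 2) :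
    |(∫ x in a..b, f x) - S|
      ≤ 1 / 12 * ((b - a) ^ 3 / N ^ 2) * ⨆ x : Set.Icc a b, |f'' x.1| := by
  have hk0 : (0:ℝ) < k := Nat.cast_pos.mpr hk
  have hN : 0 < N := lt_of_lt_of_le hk hkN
  have hN0 : (0:ℝ) < N := Nat.cast_pos.mpr hN
  have hl0 : 0 < l := by rw [hl]; exact div_pos (by linarith) hk0
  have hkl : (k : ℝ) * l = b - a := by rw [hl]; field_simp
  have hfc : ContinuousOn f (Set.Icc a b) := fun x hx => (hf' x hx).continuousWithinAt
  set Minf : ℝ := ⨆ x : Set.Icc a b, |f'' x.1| with hMinf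
  have hbddab : BddAbove (Set.range fun x : Set.Icc a b => |f'' x.1|) := by
    rw [show (fun x : Set.Icc a b => |f'' x.1|) = (fun y => |f'' y|) ∘ Subtype.val from rfl,
      Set.range_comp, Subtype.range_coe]
    exact (isCompact_Icc.image_of_continuousOn hcont.abs).bddAbove
  have hle_Minf : ∀ x ∈ Set.Icc a b, |f'' x| ≤ Minf := fun x hx => le_ciSup hbddab ⟨x, hx⟩
  have hsubj : ∀ j : Fin k,
      Set.Icc (a + (j : ℝ) * l) (a + ((j : ℝ) + 1) * l) ⊆ Set.Icc a b := by
    intro j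
    have hj1 : ((j : ℕ) : ℝ) + 1 ≤ (k : ℝ) := by exact_mod_cast j.2
    have hj0 : (0:ℝ) ≤ ((j : ℕ) : ℝ) := Nat.cast_nonneg _
    refine Set.Icc_subset_Icc ?_ ?_
    · nlinarith
    · nlinarith
  have hMbound : ∀ j : Fin k, ∀ x ∈ Set.Icc (a + (j : ℝ) * l) (a + ((j : ℝ) + 1) * l),
      |f'' x| ≤ M j := by
    intro j x hx
    rw [hM j]
    have hb2 : BddAbove (Set.range
        fun x : Set.Icc (a + (j : ℝ) * l) (a + ((j : ℝ) + 1) * l) => |f'' x.1|) := by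
      rw [show (fun x : Set.Icc (a + (j : ℝ) * l) (a + ((j : ℝ) + 1) * l) => |f'' x.1|)
          = (fun y => |f'' y|) ∘ Subtype.val from rfl, Set.range_comp, Subtype.range_coe]
      exact (isCompact_Icc.image_of_continuousOn ((hcont.mono (hsubj j)).abs)).bddAbove
    exact le_ciSup hb2 ⟨x, hx⟩
  have hMle : ∀ j, M j ≤ Minf := by
    intro j
    rw [hM j]
    have hne : Nonempty (Set.Icc (a + (j : ℝ) * l) (a + ((j : ℝ) + 1) * l)) :=
      ⟨⟨a + (j : ℝ) * l, le_refl _, by nlinarith⟩⟩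
    exact ciSup_le fun x => hle_Minf x.1 (hsubj j x.2)
  have hMinf0 : 0 ≤ Minf := le_trans (hMpos ⟨0, hk⟩).le (hMle ⟨0, hk⟩)
  set Ssum : ℝ := ∑ p, Real.sqrt (M p) with hSsum
  have hSpos : 0 < Ssum :=
    Finset.sum_pos (fun p _ => Real.sqrt_pos.mpr (hMpos p)) ⟨⟨0, hk⟩, Finset.mem_univ _⟩
  have hnpos : ∀ j, 0 < n j := by
    intro j
    rw [hn j, Nat.ceil_pos]
    exact div_pos (mul_pos hN0 (Real.sqrt_pos.mpr (hMpos j))) hSpos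
  have hnge : ∀ j, (N : ℝ) * Real.sqrt (M j) / Ssum ≤ (n j : ℝ) := by
    intro j
    rw [hn j]
    exact Nat.le_ceil _
  -- split the full integral
  have hint : ∀ j : ℕ, j < k → IntervalIntegrable f volume
      ((fun i : ℕ => a + (i : ℝ) * l) j) ((fun i : ℕ => a + (i : ℝ) * l) (j + 1)) := by
    intro j hj
    apply ContinuousOn.intervalIntegrable
    apply hfc.mono
    simp only []
    have hj1 : ((j : ℕ) : ℝ) + 1 ≤ (k : ℝ) := by exact_mod_cast hj
    have hj0 : (0:ℝ) ≤ (j : ℝ) := Nat.cast_nonneg _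
    have hc : ((j + 1 : ℕ) : ℝ) = (j : ℝ) + 1 := by push_cast; ring
    rw [hc, Set.uIcc_of_le (by nlinarith)]
    refine Set.Icc_subset_Icc (by nlinarith) (by nlinarith)
  have hadj := intervalIntegral.sum_integral_adjacent_intervals hint
  have h2 : ∑ j ∈ Finset.range k, ∫ t in (a + (j : ℝ) * l)..(a + ((j : ℝ) + 1) * l), f t
      = ∫ t in (a + ((0:ℕ) : ℝ) * l)..(a + ((k:ℕ) : ℝ) * l), f t := by
    rw [← hadj]
    apply Finset.sum_congr rfl
    intro i _
    congr 1
    push_cast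
    ring
  have hsplit : (∫ x in a..b, f x)
      = ∑ j : Fin k, ∫ t in (a + (j : ℝ) * l)..(a + ((j : ℝ) + 1) * l), f t := by
    rw [Fin.sum_univ_eq_sum_range
      (fun j : ℕ => ∫ t in (a + (j : ℝ) * l)..(a + ((j : ℝ) + 1) * l), f t) k, h2,
      show a + ((0:ℕ) : ℝ) * l = a by push_cast; ring,
      show a + ((k:ℕ) : ℝ) * l = b by rw [hkl]; ring]
  -- per-interval bound
  have key : ∀ j : Fin k,
      |(∫ t in (a + (j : ℝ) * l)..(a + ((j : ℝ) + 1) * l), f t) - ∑ i ∈ Finset.range (n j),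
        l / (n j) * (f (a + (j : ℝ) * l + i * (l / (n j)))
          + f (a + (j : ℝ) * l + ((i : ℝ) + 1) * (l / (n j)))) / 2|
      ≤ M j * l ^ 3 / (12 * (n j) ^ 2) := by
    intro j
    have hend : a + (j : ℝ) * l + l = a + ((j : ℝ) + 1) * l := by ring
    have := trap_composite a b (a + (j : ℝ) * l) f f' f'' hf' hf'' hcont (n j) (hnpos j)
      l (M j) hl0 (by rw [hend]; exact hsubj j) (by rw [hend]; exact hMbound j)
    rwa [hend] at this
  rw [hsplit, hS, ← Finset.sum_sub_distrib]
  refine le_trans (Finset.abs_sum_le_sum_abs _ _) ?_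
  refine le_trans (Finset.sum_le_sum fun j _ => key j) ?_
  -- arithmetic
  have perj : ∀ j : Fin k, M j * l ^ 3 / (12 * (n j) ^ 2) ≤ l ^ 3 * Ssum ^ 2 / (12 * N ^ 2) := by
    intro j
    have h1 := hnge j
    have h2 : ((N : ℝ) * Real.sqrt (M j) / Ssum) ^ 2 ≤ ((n j : ℝ)) ^ 2 :=
      pow_le_pow_left₀ (by positivity) h1 2
    rw [div_pow, mul_pow, Real.sq_sqrt (hMpos j).le] at h2
    have h3 : (N : ℝ) ^ 2 * M j ≤ Ssum ^ 2 * (n j) ^ 2 := by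
      rw [div_le_iff₀ (by positivity)] at h2
      nlinarith
    have hnj0 : (0:ℝ) < (n j : ℝ) := Nat.cast_pos.mpr (hnpos j)
    rw [div_le_div_iff₀ (by positivity) (by positivity)]
    nlinarith [pow_nonneg hl0.le 3]
  refine le_trans (Finset.sum_le_sum fun j _ => perj j) ?_
  rw [Finset.sum_const, Finset.card_univ, Fintype.card_fin, nsmul_eq_mul]
  have hSle : Ssum ≤ (k : ℝ) * Real.sqrt Minf := by
    calc Ssum ≤ ∑ _p : Fin k, Real.sqrt Minf :=
          Finset.sum_le_sum fun p _ => Real.sqrt_le_sqrt (hMle p)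
      _ = (k : ℝ) * Real.sqrt Minf := by
          rw [Finset.sum_const, Finset.card_univ, Fintype.card_fin, nsmul_eq_mul]
  have hSq2 : Ssum ^ 2 ≤ (k : ℝ) ^ 2 * Minf := by
    have := pow_le_pow_left₀ hSpos.le hSle 2
    rwa [mul_pow, Real.sq_sqrt hMinf0] at this
  rw [← hkl,
    show (k : ℝ) * (l ^ 3 * Ssum ^ 2 / (12 * N ^ 2)) = (k : ℝ) * l ^ 3 * Ssum ^ 2 / (12 * N ^ 2)
      from by ring,
    show 1 / 12 * (((k : ℝ) * l) ^ 3 / N ^ 2) * Minf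
      = (k : ℝ) ^ 3 * l ^ 3 * Minf / (12 * N ^ 2) from by ring]
  gcongr ?_ / _
  nlinarith [mul_le_mul_of_nonneg_left hSq2 (show (0:ℝ) ≤ (k : ℝ) * l ^ 3 by positivity)]
end
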